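/- arXiv:1103.3801 — 3 statements merged into one kernel-verified Lean document; each statement's English description precedes it below -/
import Mathlib

section
/- Let f : ℝ → ℝ be differentiable on [x₀, b] with f' Lipschitz with constant L there, let m ≥ L, and suppose f(x₀) > 0. Then f(x) > 0 for every x in [x₀, x̄) ∩ [x₀, b], where x̄ = x₀ + (f'(x₀) + √(f'(x₀)² + 2m·f(x₀)))/m. In particular, any root of f in [x₀, b] satisfies x ≥ x̄. -/
/-!
On `[x₀, b]` the Lipschitz bound gives `f' t ≥ f' x₀ - m (t - x₀)`, so `f` dominates the
concave quadratic `q x = f x₀ + f' x₀ (x - x₀) - m/2 (x - x₀)²`, which agrees with `f` at `x₀`.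
As `q x₀ = f x₀ > 0`, the point `x̄` is the larger root of `q` and the smaller root lies left
of `x₀`, so `q`, hence `f`, is positive on `[x₀, x̄)`.
-/

open Set

theorem quadratic_minorant_le {f f' : ℝ → ℝ} {a b m : ℝ}
    (hderiv : ∀ x ∈ Icc a b, HasDerivAt f (f' x) x)
    (hf' : ∀ t ∈ Icc a b, f' a - m * (t - a) ≤ f' t) :
    ∀ x ∈ Icc a b, f a + f' a * (x - a) - m / 2 * (x - a) ^ 2 ≤ f x := by
  set g : ℝ → ℝ := fun t => f t - (f a + f' a * (t - a) - m / 2 * (t - a) ^ 2)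
  have hg : ∀ t ∈ Icc a b, HasDerivAt g (f' t - (f' a - m * (t - a))) t := by
    intro t ht
    have hlin : HasDerivAt (fun t : ℝ => t - a) 1 t := (hasDerivAt_id t).sub_const a
    have hq := ((hasDerivAt_const t (f a)).add (hlin.const_mul (f' a))).sub
      ((hlin.pow 2).const_mul (m / 2))
    exact ((hderiv t ht).sub hq).congr_deriv (by ring)
  have hmono : MonotoneOn g (Icc a b) := by
    refine monotoneOn_of_hasDerivWithinAt_nonneg (convex_Icc a b)
      (fun t ht => (hg t ht).continuousAt.continuousWithinAt)
      (fun t ht => (hg t (interior_subset ht)).hasDerivWithinAt)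
      (fun t ht => sub_nonneg.2 (hf' t (interior_subset ht)))
  intro x hx
  have hga : g a = 0 := by simp [g]
  have := hmono (left_mem_Icc.2 (hx.1.trans hx.2)) hx hx.1
  rw [hga] at this
  exact sub_nonneg.1 this

theorem sub_mul_le_of_abs_sub_le_mul {g : ℝ → ℝ} {a b L m : ℝ}
    (hlip : ∀ x ∈ Icc a b, ∀ y ∈ Icc a b, |g x - g y| ≤ L * |x - y|) (hm : L ≤ m)
    (ha : a ∈ Icc a b) : ∀ t ∈ Icc a b, g a - m * (t - a) ≤ g t := by
  intro t ht
  have := (abs_le.1 ((hlip t ht a ha).trans (mul_le_mul_of_nonneg_right hm (abs_nonneg _)))).1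
  rw [abs_of_nonneg (sub_nonneg.2 ht.1)] at this
  linarith

theorem quadratic_pos_of_lt_larger_root {a c m h : ℝ} (hm : 0 < m) (hc : 0 < c) (hh : 0 ≤ h)
    (hlt : h < (a + √(a ^ 2 + 2 * m * c)) / m) :
    0 < c + a * h - m / 2 * h ^ 2 := by
  set s := √(a ^ 2 + 2 * m * c)
  have hs : s ^ 2 = a ^ 2 + 2 * m * c := Real.sq_sqrt (by positivity)
  have has : a < s := by nlinarith [Real.sqrt_nonneg (a ^ 2 + 2 * m * c), mul_pos hm hc]
  have hmh : m * h < a + s := by rwa [lt_div_iff₀ hm, mul_comm] at hlt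
  have hfactor : 2 * m * (c + a * h - m / 2 * h ^ 2) = (a + s - m * h) * (s - a + m * h) := by
    linear_combination -hs
  have hprod : 0 < (a + s - m * h) * (s - a + m * h) :=
    mul_pos (by linarith) (by linarith [mul_nonneg hm.le hh])
  exact pos_of_mul_pos_right (hfactor ▸ hprod) (by positivity)

theorem safe_step_no_root (f f' : ℝ → ℝ) (x₀ b L m : ℝ)
    (hderiv : ∀ x ∈ Set.Icc x₀ b, HasDerivAt f (f' x) x)
    (hlip : ∀ x ∈ Set.Icc x₀ b, ∀ y ∈ Set.Icc x₀ b, |f' x - f' y| ≤ L * |x - y|)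
    (hm : L ≤ m) (hf₀ : 0 < f x₀) :
    let xbar : ℝ := x₀ + (f' x₀ + Real.sqrt ((f' x₀) ^ 2 + 2 * m * f x₀)) / m
    (∀ x ∈ Set.Ico x₀ xbar ∩ Set.Icc x₀ b, 0 < f x) ∧
      ∀ x ∈ Set.Icc x₀ b, f x = 0 → xbar ≤ x := by
  intro xbar
  have hpos : ∀ x ∈ Ico x₀ xbar ∩ Icc x₀ b, 0 < f x := by
    rintro x ⟨⟨hx₀x, hxbar⟩, hx⟩
    rcases hx₀x.eq_or_lt with rfl | hlt
    · exact hf₀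
    have hx₀ : x₀ ∈ Icc x₀ b := left_mem_Icc.2 (hx₀x.trans hx.2)
    have hL : 0 ≤ L := by
      have := (abs_nonneg _).trans (hlip x hx x₀ hx₀)
      exact nonneg_of_mul_nonneg_left this (abs_pos.2 (sub_ne_zero.2 hlt.ne'))
    have hm₀ : 0 < m := (hL.trans hm).lt_of_ne fun h0 => by
      simp [xbar, ← h0] at hxbar
      linarith
    have hq := quadratic_pos_of_lt_larger_root hm₀ hf₀ (sub_nonneg.2 hx₀x)
      (sub_lt_iff_lt_add'.2 hxbar)
    linarith [quadratic_minorant_le hderiv (sub_mul_le_of_abs_sub_le_mul hlip hm hx₀) x hx]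
  exact ⟨hpos, fun x hx hfx => not_lt.1 fun h => (hpos x ⟨⟨hx.1, h⟩, hx⟩).ne' hfx⟩
end

section
/- Let f : [x₀,x₁] → ℝ be differentiable with f' Lipschitz of constant L, m ≥ L, m > 0, and let φ be the auxiliary function of (11) built with parameter m. If min{φ(x) : x ∈ [x₀,x₁]} > 0, then f(x) > 0 for all x ∈ [x₀, x₁]; in particular f has no root in [x₀, x₁]. -/
/-!
Because `f'` is `m`-Lipschitz, `f' + m x` is monotone and `f' - m x` antitone, so `f + m x² / 2`
is convex and `f - q` is concave for every quadratic `q` with leading coefficient `m / 2`. Their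
tangent lines give the two-sided Taylor bound `|f x - f u - f' u (x - u)| ≤ m (x - u)² / 2`, so
the two outer pieces of `φ` lie below `f`. The middle piece `q` touches the left piece at `y'` and
the right one at `y`. Comparing the lower parabola from one endpoint with the upper parabola from
the other at the vertex of their difference shows `x₀ ≤ y' < y ≤ x₁`, and since `f - q ≥ 0` at
`y'` and `y`, concavity gives `q ≤ f` on `[y', y]`. Hence `0 < φ ≤ f`.
-/

open Set

theorem convexOn_of_hasDerivAt_of_monotoneOn {D : Set ℝ} (hD : Convex ℝ D) {g g' : ℝ → ℝ}
    (hg : ∀ x ∈ D, HasDerivAt g (g' x) x) (hg' : MonotoneOn g' D) : ConvexOn ℝ D g :=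
  hg'.mono interior_subset |>.congr (fun x hx => (hg x (interior_subset hx)).deriv.symm)
    |> MonotoneOn.convexOn_of_deriv hD
      (fun x hx => (hg x hx).continuousAt.continuousWithinAt)
      (fun x hx => (hg x (interior_subset hx)).differentiableAt.differentiableWithinAt)

theorem concaveOn_of_hasDerivAt_of_antitoneOn {D : Set ℝ} (hD : Convex ℝ D) {g g' : ℝ → ℝ}
    (hg : ∀ x ∈ D, HasDerivAt g (g' x) x) (hg' : AntitoneOn g' D) : ConcaveOn ℝ D g :=
  neg_convexOn_iff.mp <| convexOn_of_hasDerivAt_of_monotoneOn hD (fun x hx => (hg x hx).neg) hg'.neg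

theorem ConvexOn.add_mul_sub_le_of_hasDerivAt {S : Set ℝ} {g : ℝ → ℝ} {g' u x : ℝ}
    (hg : ConvexOn ℝ S g) (hu : u ∈ S) (hx : x ∈ S) (hgu : HasDerivAt g g' u) :
    g u + g' * (x - u) ≤ g x := by
  rcases lt_trichotomy u x with hux | rfl | hxu
  · have := hg.le_slope_of_hasDerivAt hu hx hux hgu
    rw [slope_def_field, le_div_iff₀ (sub_pos.2 hux)] at this
    linarith
  · simp
  · have := hg.slope_le_of_hasDerivAt hx hu hxu hgu
    rw [slope_def_field, div_le_iff₀ (sub_pos.2 hxu)] at this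
    linarith

theorem ConcaveOn.le_add_mul_sub_of_hasDerivAt {S : Set ℝ} {g : ℝ → ℝ} {g' u x : ℝ}
    (hg : ConcaveOn ℝ S g) (hu : u ∈ S) (hx : x ∈ S) (hgu : HasDerivAt g g' u) :
    g x ≤ g u + g' * (x - u) := by
  have := (neg_convexOn_iff.mpr hg).add_mul_sub_le_of_hasDerivAt hu hx hgu.neg
  simp only [Pi.neg_apply] at this
  linarith

section LipschitzDeriv

variable {f f' : ℝ → ℝ} {a b m : ℝ}

theorem abs_sub_le_of_lipschitz (hlip : ∀ x ∈ Icc a b, ∀ z ∈ Icc a b, |f' x - f' z| ≤ m * |x - z|)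
    {x z : ℝ} (hx : x ∈ Icc a b) (hz : z ∈ Icc a b) (hxz : x ≤ z) :
    |f' z - f' x| ≤ m * (z - x) := by
  rw [abs_sub_comm, ← abs_of_nonneg (sub_nonneg.2 hxz), abs_sub_comm z x]
  exact hlip x hx z hz

theorem monotoneOn_add_mul_of_lipschitz
    (hlip : ∀ x ∈ Icc a b, ∀ z ∈ Icc a b, |f' x - f' z| ≤ m * |x - z|) :
    MonotoneOn (fun x => f' x + m * x) (Icc a b) := fun x hx z hz hxz => by
  linarith [neg_abs_le (f' z - f' x), abs_sub_le_of_lipschitz hlip hx hz hxz]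

theorem antitoneOn_sub_mul_of_lipschitz
    (hlip : ∀ x ∈ Icc a b, ∀ z ∈ Icc a b, |f' x - f' z| ≤ m * |x - z|) :
    AntitoneOn (fun x => f' x - m * x) (Icc a b) := fun x hx z hz hxz => by
  linarith [le_abs_self (f' z - f' x), abs_sub_le_of_lipschitz hlip hx hz hxz]

theorem hasDerivAt_half_mul_sq_add (m β γ x : ℝ) :
    HasDerivAt (fun t => m / 2 * t ^ 2 + β * t + γ) (m * x + β) x := by
  have h := (((hasDerivAt_pow 2 x).const_mul (m / 2)).add
    ((hasDerivAt_id' x).const_mul β)).add_const γ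
  exact h.congr_deriv (by norm_num; ring)

theorem convexOn_add_quadratic_of_lipschitz (hderiv : ∀ x ∈ Icc a b, HasDerivAt f (f' x) x)
    (hlip : ∀ x ∈ Icc a b, ∀ z ∈ Icc a b, |f' x - f' z| ≤ m * |x - z|)
    (β γ : ℝ) :
    ConvexOn ℝ (Icc a b) (fun x => f x + (m / 2 * x ^ 2 + β * x + γ)) :=
  convexOn_of_hasDerivAt_of_monotoneOn (convex_Icc a b)
    (fun x hx => (hderiv x hx).add (hasDerivAt_half_mul_sq_add m β γ x))
    (fun x hx z hz hxz => by
      linarith [monotoneOn_add_mul_of_lipschitz hlip hx hz hxz])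

theorem concaveOn_sub_quadratic_of_lipschitz (hderiv : ∀ x ∈ Icc a b, HasDerivAt f (f' x) x)
    (hlip : ∀ x ∈ Icc a b, ∀ z ∈ Icc a b, |f' x - f' z| ≤ m * |x - z|)
    (β γ : ℝ) :
    ConcaveOn ℝ (Icc a b) (fun x => f x - (m / 2 * x ^ 2 + β * x + γ)) :=
  concaveOn_of_hasDerivAt_of_antitoneOn (convex_Icc a b)
    (fun x hx => (hderiv x hx).sub (hasDerivAt_half_mul_sq_add m β γ x))
    (fun x hx z hz hxz => by
      linarith [antitoneOn_sub_mul_of_lipschitz hlip hx hz hxz])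

theorem sub_half_mul_sq_le_of_lipschitz (hderiv : ∀ x ∈ Icc a b, HasDerivAt f (f' x) x)
    (hlip : ∀ x ∈ Icc a b, ∀ z ∈ Icc a b, |f' x - f' z| ≤ m * |x - z|)
    {u x : ℝ} (hu : u ∈ Icc a b) (hx : x ∈ Icc a b) :
    f u + f' u * (x - u) - m / 2 * (x - u) ^ 2 ≤ f x := by
  have := (convexOn_add_quadratic_of_lipschitz hderiv hlip 0 0).add_mul_sub_le_of_hasDerivAt hu hx
    ((hderiv u hu).add (hasDerivAt_half_mul_sq_add m 0 0 u))
  linarith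

theorem le_add_half_mul_sq_of_lipschitz (hderiv : ∀ x ∈ Icc a b, HasDerivAt f (f' x) x)
    (hlip : ∀ x ∈ Icc a b, ∀ z ∈ Icc a b, |f' x - f' z| ≤ m * |x - z|)
    {u x : ℝ} (hu : u ∈ Icc a b) (hx : x ∈ Icc a b) :
    f x ≤ f u + f' u * (x - u) + m / 2 * (x - u) ^ 2 := by
  have := (concaveOn_sub_quadratic_of_lipschitz hderiv hlip 0 0).le_add_mul_sub_of_hasDerivAt hu hx
    ((hderiv u hu).sub (hasDerivAt_half_mul_sq_add m 0 0 u))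
  linarith

theorem sq_le_four_mul_of_lipschitz_left (hderiv : ∀ x ∈ Icc a b, HasDerivAt f (f' x) x)
    (hlip : ∀ x ∈ Icc a b, ∀ z ∈ Icc a b, |f' x - f' z| ≤ m * |x - z|)
    (hab : a ≤ b) (hm : 0 < m) :
    (m * (b - a) + f' b - f' a) ^ 2 ≤
      4 * m * (f b - f a - f' a * (b - a) + m / 2 * (b - a) ^ 2) := by
  set D := m * (b - a) + f' b - f' a
  set s := D / (2 * m) with hs
  have hslope :=
    abs_le.mp (abs_sub_le_of_lipschitz hlip (left_mem_Icc.2 hab) (right_mem_Icc.2 hab) hab)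
  have hs₀ : 0 ≤ s := div_nonneg (by linarith) (by linarith)
  have hsb : s ≤ b - a := by rw [hs, div_le_iff₀ (by linarith)]; linarith
  have ht : b - s ∈ Icc a b := ⟨by linarith, by linarith⟩
  have hlow := sub_half_mul_sq_le_of_lipschitz hderiv hlip (left_mem_Icc.2 hab) ht
  have hup := le_add_half_mul_sq_of_lipschitz hderiv hlip (right_mem_Icc.2 hab) ht
  calc D ^ 2 = 4 * m * (s * D - m * s ^ 2) := by rw [hs]; field_simp; ring
    _ ≤ _ := mul_le_mul_of_nonneg_left (by linarith) (by linarith)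

theorem sq_le_four_mul_of_lipschitz_right (hderiv : ∀ x ∈ Icc a b, HasDerivAt f (f' x) x)
    (hlip : ∀ x ∈ Icc a b, ∀ z ∈ Icc a b, |f' x - f' z| ≤ m * |x - z|)
    (hab : a ≤ b) (hm : 0 < m) :
    (m * (b - a) + f' b - f' a) ^ 2 ≤
      4 * m * (f a - f b + f' b * (b - a) + m / 2 * (b - a) ^ 2) := by
  set D := m * (b - a) + f' b - f' a
  set s := D / (2 * m) with hs
  have hslope :=
    abs_le.mp (abs_sub_le_of_lipschitz hlip (left_mem_Icc.2 hab) (right_mem_Icc.2 hab) hab)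
  have hs₀ : 0 ≤ s := div_nonneg (by linarith) (by linarith)
  have hsb : s ≤ b - a := by rw [hs, div_le_iff₀ (by linarith)]; linarith
  have ht : a + s ∈ Icc a b := ⟨by linarith, by linarith⟩
  have hlow := sub_half_mul_sq_le_of_lipschitz hderiv hlip (right_mem_Icc.2 hab) ht
  have hup := le_add_half_mul_sq_of_lipschitz hderiv hlip (left_mem_Icc.2 hab) ht
  calc D ^ 2 = 4 * m * (s * D - m * s ^ 2) := by rw [hs]; field_simp; ring
    _ ≤ _ := mul_le_mul_of_nonneg_left (by linarith) (by linarith)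

end LipschitzDeriv

theorem middle_parabola_le {f f' : ℝ → ℝ} {x₀ x₁ m y y' bq cq x : ℝ}
    (hderiv : ∀ x ∈ Icc x₀ x₁, HasDerivAt f (f' x) x)
    (hlip : ∀ x ∈ Icc x₀ x₁, ∀ z ∈ Icc x₀ x₁, |f' x - f' z| ≤ m * |x - z|) (hm : 0 < m)
    (hy : y = (x₁ - x₀) / 4 + (f' x₁ - f' x₀) / (4 * m) +
      (f x₀ - f x₁ + f' x₁ * x₁ - f' x₀ * x₀ + m / 2 * (x₁ ^ 2 - x₀ ^ 2)) /
        (m * (x₁ - x₀) + f' x₁ - f' x₀))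
    (hy' : y' = -(x₁ - x₀) / 4 - (f' x₁ - f' x₀) / (4 * m) +
      (f x₀ - f x₁ + f' x₁ * x₁ - f' x₀ * x₀ + m / 2 * (x₁ ^ 2 - x₀ ^ 2)) /
        (m * (x₁ - x₀) + f' x₁ - f' x₀))
    (hb : bq = f' x₁ - 2 * m * y + m * x₁)
    (hc : cq = f x₁ - f' x₁ * x₁ - m / 2 * x₁ ^ 2 + m * y ^ 2)
    (hx : x ∈ Icc x₀ x₁) (hy'x : y' < x) (hxy : x ≤ y) :
    m / 2 * x ^ 2 + bq * x + cq ≤ f x := by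
  have hx₀₁ : x₀ ≤ x₁ := hx.1.trans hx.2
  have hgap : m * (x₁ - x₀) + f' x₁ - f' x₀ = 2 * m * (y - y') := by
    rw [hy, hy']; field_simp; ring
  have hD : 0 < m * (x₁ - x₀) + f' x₁ - f' x₀ := by
    rw [hgap]; exact mul_pos (by linarith) (by linarith)
  -- stated in the normal form that `field_simp` gives the denominator
  have hD₀ : (x₁ - x₀) * m + f' x₁ - f' x₀ ≠ 0 := ne_of_gt (by linarith)
  have hy₁ : y ≤ x₁ := by
    have hA := sq_le_four_mul_of_lipschitz_left hderiv hlip hx₀₁ hm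
    have hdist : x₁ - y = (4 * m * (f x₁ - f x₀ - f' x₀ * (x₁ - x₀) + m / 2 * (x₁ - x₀) ^ 2) -
        (m * (x₁ - x₀) + f' x₁ - f' x₀) ^ 2) / (4 * m * (m * (x₁ - x₀) + f' x₁ - f' x₀)) := by
      rw [hy]; field_simp; ring
    have : 0 ≤ x₁ - y := hdist ▸ div_nonneg (by linarith) (by positivity)
    linarith
  have hy'₀ : x₀ ≤ y' := by
    have hB := sq_le_four_mul_of_lipschitz_right hderiv hlip hx₀₁ hm
    have hdist : y' - x₀ = (4 * m * (f x₀ - f x₁ + f' x₁ * (x₁ - x₀) + m / 2 * (x₁ - x₀) ^ 2) -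
        (m * (x₁ - x₀) + f' x₁ - f' x₀) ^ 2) / (4 * m * (m * (x₁ - x₀) + f' x₁ - f' x₀)) := by
      rw [hy']; field_simp; ring
    have : 0 ≤ y' - x₀ := hdist ▸ div_nonneg (by linarith) (by positivity)
    linarith
  have hyI : y ∈ Icc x₀ x₁ := ⟨by linarith, hy₁⟩
  have hy'I : y' ∈ Icc x₀ x₁ := ⟨hy'₀, by linarith⟩
  have hqy : m / 2 * y ^ 2 + bq * y + cq ≤ f y := by
    have := sub_half_mul_sq_le_of_lipschitz hderiv hlip (right_mem_Icc.2 hx₀₁) hyI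
    rw [hb, hc]; linarith
  have hqy' : m / 2 * y' ^ 2 + bq * y' + cq ≤ f y' := by
    have := sub_half_mul_sq_le_of_lipschitz hderiv hlip (left_mem_Icc.2 hx₀₁) hy'I
    have htangent :
        m / 2 * y' ^ 2 + bq * y' + cq = f x₀ + f' x₀ * (y' - x₀) - m / 2 * (y' - x₀) ^ 2 := by
      rw [hb, hc, hy, hy']; field_simp; ring
    linarith
  have := (concaveOn_sub_quadratic_of_lipschitz hderiv hlip bq cq).min_le_of_mem_Icc hy'I hyI
    ⟨hy'x.le, hxy⟩
  have := (le_min (sub_nonneg.2 hqy') (sub_nonneg.2 hqy)).trans this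
  linarith

theorem positive_characteristic_no_root_general (f f' : ℝ → ℝ) (x₀ x₁ L m y y' bq cq : ℝ)
    (hderiv : ∀ x ∈ Set.Icc x₀ x₁, HasDerivAt f (f' x) x)
    (hlip : ∀ x ∈ Set.Icc x₀ x₁, ∀ z ∈ Set.Icc x₀ x₁, |f' x - f' z| ≤ L * |x - z|)
    (hm : L ≤ m) (hm0 : 0 < m)
    (hy : y = (x₁ - x₀) / 4 + (f' x₁ - f' x₀) / (4 * m) +
      (f x₀ - f x₁ + f' x₁ * x₁ - f' x₀ * x₀ + m / 2 * (x₁ ^ 2 - x₀ ^ 2)) /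
        (m * (x₁ - x₀) + f' x₁ - f' x₀))
    (hy' : y' = -(x₁ - x₀) / 4 - (f' x₁ - f' x₀) / (4 * m) +
      (f x₀ - f x₁ + f' x₁ * x₁ - f' x₀ * x₀ + m / 2 * (x₁ ^ 2 - x₀ ^ 2)) /
        (m * (x₁ - x₀) + f' x₁ - f' x₀))
    (hb : bq = f' x₁ - 2 * m * y + m * x₁)
    (hc : cq = f x₁ - f' x₁ * x₁ - m / 2 * x₁ ^ 2 + m * y ^ 2)
    (hpos : ∀ x ∈ Set.Icc x₀ x₁,
      0 < (if x ≤ y' then f x₀ + f' x₀ * (x - x₀) - m / 2 * (x - x₀) ^ 2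
           else if x ≤ y then m / 2 * x ^ 2 + bq * x + cq
           else f x₁ - f' x₁ * (x₁ - x) - m / 2 * (x₁ - x) ^ 2)) :
    (∀ x ∈ Set.Icc x₀ x₁, 0 < f x) ∧ ¬ ∃ x ∈ Set.Icc x₀ x₁, f x = 0 := by
  have hlip' : ∀ x ∈ Icc x₀ x₁, ∀ z ∈ Icc x₀ x₁, |f' x - f' z| ≤ m * |x - z| :=
    fun x hx z hz => (hlip x hx z hz).trans (mul_le_mul_of_nonneg_right hm (abs_nonneg _))
  suffices hf : ∀ x ∈ Icc x₀ x₁, 0 < f x from ⟨hf, fun ⟨x, hx, hfx⟩ => (hf x hx).ne' hfx⟩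
  intro x hx
  have hx₀₁ : x₀ ≤ x₁ := hx.1.trans hx.2
  specialize hpos x hx
  split_ifs at hpos with hxy' hxy
  · exact hpos.trans_le (sub_half_mul_sq_le_of_lipschitz hderiv hlip' (left_mem_Icc.2 hx₀₁) hx)
  · exact hpos.trans_le
      (middle_parabola_le hderiv hlip' hm0 hy hy' hb hc hx (not_le.1 hxy') hxy)
  · have := sub_half_mul_sq_le_of_lipschitz hderiv hlip' (right_mem_Icc.2 hx₀₁) hx
    linarith

theorem positive_characteristic_no_root (f f' : ℝ → ℝ) (x₀ x₁ L m y y' bq cq : ℝ)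
    (hx : x₀ < x₁)
    (hderiv : ∀ x ∈ Set.Icc x₀ x₁, HasDerivAt f (f' x) x)
    (hlip : ∀ x ∈ Set.Icc x₀ x₁, ∀ z ∈ Set.Icc x₀ x₁, |f' x - f' z| ≤ L * |x - z|)
    (hm : L ≤ m) (hm0 : 0 < m)
    (hy : y = (x₁ - x₀) / 4 + (f' x₁ - f' x₀) / (4 * m) +
      (f x₀ - f x₁ + f' x₁ * x₁ - f' x₀ * x₀ + m / 2 * (x₁ ^ 2 - x₀ ^ 2)) /
        (m * (x₁ - x₀) + f' x₁ - f' x₀))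
    (hy' : y' = -(x₁ - x₀) / 4 - (f' x₁ - f' x₀) / (4 * m) +
      (f x₀ - f x₁ + f' x₁ * x₁ - f' x₀ * x₀ + m / 2 * (x₁ ^ 2 - x₀ ^ 2)) /
        (m * (x₁ - x₀) + f' x₁ - f' x₀))
    (hb : bq = f' x₁ - 2 * m * y + m * x₁)
    (hc : cq = f x₁ - f' x₁ * x₁ - m / 2 * x₁ ^ 2 + m * y ^ 2)
    (hpos : ∀ x ∈ Set.Icc x₀ x₁,
      0 < (if x ≤ y' then f x₀ + f' x₀ * (x - x₀) - m / 2 * (x - x₀) ^ 2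
           else if x ≤ y then m / 2 * x ^ 2 + bq * x + cq
           else f x₁ - f' x₁ * (x₁ - x) - m / 2 * (x₁ - x) ^ 2)) :
    (∀ x ∈ Set.Icc x₀ x₁, 0 < f x) ∧ ¬ ∃ x ∈ Set.Icc x₀ x₁, f x = 0 :=
  positive_characteristic_no_root_general f f' x₀ x₁ L m y y' bq cq hderiv hlip hm hm0 hy hy' hb hc
    hpos
end

section
/- Let x₀ < x₁, m > 0, and suppose f : [x₀,x₁] → ℝ is differentiable with f' Lipschitz of constant L ≤ m. If f has a root in [x₀, x₁], then the characteristic R = min{φ(x) : x ∈ [x₀,x₁]} of the interval satisfies R ≤ 0, where φ is the auxiliary function (11) built from f(x₀), f(x₁), f'(x₀), f'(x₁) and parameter m. -/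
/-!
With `h = f + (m/2)·x²`, the Lipschitz bound on `f'` makes `h` convex with a `2m`-Lipschitz
derivative. Co-coercivity of `h'` sharpens the tangent bound `f u ≥ f v + f' v (u - v) - m/2 (u - v)²`
by `m (c - u)²`, where `c = (u + v)/2 + (f' v - f' u)/(2m)`; it is proved by expanding `f` around
`u` and around `v` at the point `c`, which lies between them.
The outer pieces of `φ` are the tangent bounds at `x₀` and `x₁`; the middle piece exceeds them by
`m (x - y')²` and `m (x - y)²`. At a root `r` with `y' < r ≤ y`, the points `c` built from `x₀` and
from `x₁` are exactly `y - y'` apart, so one of the two sharpened bounds dominates the middle piece.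
-/

open Set

structure HasLipschitzDerivOn (f f' : ℝ → ℝ) (m : ℝ) (s : Set ℝ) : Prop where
  hasDerivAt : ∀ x ∈ s, HasDerivAt f (f' x) x
  abs_sub_le : ∀ x ∈ s, ∀ z ∈ s, |f' x - f' z| ≤ m * |x - z|

namespace HasLipschitzDerivOn

variable {f f' : ℝ → ℝ} {m a b u v : ℝ}

theorem mono_const {L : ℝ} {s : Set ℝ} (hf : HasLipschitzDerivOn f f' L s) (hLm : L ≤ m) :
    HasLipschitzDerivOn f f' m s where
  hasDerivAt := hf.hasDerivAt
  abs_sub_le x hx z hz :=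
    (hf.abs_sub_le x hx z hz).trans (mul_le_mul_of_nonneg_right hLm (abs_nonneg _))

theorem comp_neg (hf : HasLipschitzDerivOn f f' m (Icc a b)) :
    HasLipschitzDerivOn (fun x ↦ f (-x)) (fun x ↦ -f' (-x)) m (Icc (-b) (-a)) where
  hasDerivAt x hx :=
    ((hf.hasDerivAt (-x) ⟨by linarith [hx.2], by linarith [hx.1]⟩).comp x
      (hasDerivAt_neg x)).congr_deriv (mul_neg_one _)
  abs_sub_le x hx z hz := by
    simpa only [neg_sub_neg] using hf.abs_sub_le (-z) ⟨by linarith [hz.2], by linarith [hz.1]⟩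
      (-x) ⟨by linarith [hx.2], by linarith [hx.1]⟩

theorem abs_sub_sub_le_of_le (hf : HasLipschitzDerivOn f f' m (Icc a b)) (hu : a ≤ u)
    (hv : v ≤ b) (huv : u ≤ v) :
    |f v - f u - f' u * (v - u)| ≤ m / 2 * (v - u) ^ 2 := by
  have hsub : Icc u v ⊆ Icc a b := Icc_subset_Icc hu hv
  have hderiv (t : ℝ) (ht : t ∈ Icc u v) :
      HasDerivAt (fun t ↦ f t - f u - f' u * (t - u)) (f' t - f' u) t :=
    (((hf.hasDerivAt t (hsub ht)).sub_const (f u)).sub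
      (((hasDerivAt_id t).sub_const u).const_mul (f' u))).congr_deriv (by simp)
  have hbound (t : ℝ) : HasDerivAt (fun t ↦ m / 2 * (t - u) ^ 2) (m * (t - u)) t :=
    ((((hasDerivAt_id' t).sub_const u).pow 2).const_mul (m / 2)).congr_deriv (by ring)
  refine image_norm_le_of_norm_deriv_right_le_deriv_boundary
    (fun t ht ↦ (hderiv t ht).continuousAt.continuousWithinAt)
    (fun t ht ↦ (hderiv t (Ico_subset_Icc_self ht)).hasDerivWithinAt) (by simp) hbound
    (fun t ht ↦ ?_) (right_mem_Icc.2 huv)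
  have := hf.abs_sub_le t (hsub (Ico_subset_Icc_self ht)) u (hsub (left_mem_Icc.2 huv))
  rwa [abs_of_nonneg (sub_nonneg.2 ht.1)] at this

theorem abs_sub_sub_le (hf : HasLipschitzDerivOn f f' m (Icc a b)) (hu : u ∈ Icc a b)
    (hv : v ∈ Icc a b) :
    |f v - f u - f' u * (v - u)| ≤ m / 2 * (v - u) ^ 2 := by
  rcases le_total u v with huv | hvu
  · exact hf.abs_sub_sub_le_of_le hu.1 hv.2 huv
  · have := hf.comp_neg.abs_sub_sub_le_of_le (u := -u) (v := -v) (neg_le_neg hu.2)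
      (neg_le_neg hv.1) (neg_le_neg hvu)
    simp only [neg_neg] at this
    convert this using 2 <;> ring

theorem tangent_add_mul_sq_le (hf : HasLipschitzDerivOn f f' m (Icc a b)) (hm : 0 < m)
    (hu : u ∈ Icc a b) (hv : v ∈ Icc a b) :
    f v + f' v * (u - v) - m / 2 * (u - v) ^ 2 + m * ((v - u) / 2 + (f' v - f' u) / (2 * m)) ^ 2
      ≤ f u := by
  set δ := (v - u) / 2 + (f' v - f' u) / (2 * m)
  have hslope : f' v - f' u = 2 * m * δ - m * (v - u) := by
    simp only [δ]
    field_simp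
    ring
  have hc : u + δ ∈ Icc a b := by
    have hlip := hf.abs_sub_le v hv u hu
    rcases le_total u v with huv | hvu
    · rw [abs_of_nonneg (sub_nonneg.2 huv)] at hlip
      have := abs_le.1 hlip
      constructor <;> nlinarith [hu.1, hv.2]
    · rw [abs_of_nonpos (sub_nonpos.2 hvu)] at hlip
      have := abs_le.1 hlip
      constructor <;> nlinarith [hu.2, hv.1]
  have hfu := (abs_le.1 (hf.abs_sub_sub_le hu hc)).2
  have hfv := (abs_le.1 (hf.abs_sub_sub_le hv hc)).1
  linear_combination hfu + hfv - δ * hslope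

end HasLipschitzDerivOn

theorem middle_eq_left_add_mul_sq {x₀ x₁ m a₀ a₁ d₀ d₁ y y' bq cq : ℝ} (hm : 0 < m)
    (hyy' : y' < y)
    (hy : y = (x₁ - x₀) / 4 + (d₁ - d₀) / (4 * m) +
      (a₀ - a₁ + d₁ * x₁ - d₀ * x₀ + m / 2 * (x₁ ^ 2 - x₀ ^ 2)) / (m * (x₁ - x₀) + d₁ - d₀))
    (hy' : y' = -(x₁ - x₀) / 4 - (d₁ - d₀) / (4 * m) +
      (a₀ - a₁ + d₁ * x₁ - d₀ * x₀ + m / 2 * (x₁ ^ 2 - x₀ ^ 2)) / (m * (x₁ - x₀) + d₁ - d₀))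
    (hb : bq = d₁ - 2 * m * y + m * x₁) (hc : cq = a₁ - d₁ * x₁ - m / 2 * x₁ ^ 2 + m * y ^ 2)
    (x : ℝ) :
    m / 2 * x ^ 2 + bq * x + cq = a₀ + d₀ * (x - x₀) - m / 2 * (x - x₀) ^ 2 + m * (x - y') ^ 2 := by
  have hΔ : m * (x₁ - x₀) + d₁ - d₀ = 2 * m * (y - y') := by
    rw [hy, hy']
    field_simp
    ring
  have hsum : (m * (x₁ - x₀) + d₁ - d₀) * (y + y') =
      2 * (a₀ - a₁ + d₁ * x₁ - d₀ * x₀ + m / 2 * (x₁ ^ 2 - x₀ ^ 2)) := by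
    have : m * (x₁ - x₀) + d₁ - d₀ ≠ 0 := by
      rw [hΔ]
      nlinarith
    rw [hy, hy']
    field_simp
    ring
  rw [hb, hc]
  linear_combination (x - (y + y') / 2) * hΔ + hsum / 2

theorem root_implies_nonpositive_characteristic_general (f f' : ℝ → ℝ)
    (x₀ x₁ L m y y' bq cq : ℝ) (hm0 : 0 < m)
    (hderiv : ∀ x ∈ Set.Icc x₀ x₁, HasDerivAt f (f' x) x)
    (hlip : ∀ x ∈ Set.Icc x₀ x₁, ∀ z ∈ Set.Icc x₀ x₁, |f' x - f' z| ≤ L * |x - z|)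
    (hm : L ≤ m)
    (hy : y = (x₁ - x₀) / 4 + (f' x₁ - f' x₀) / (4 * m) +
      (f x₀ - f x₁ + f' x₁ * x₁ - f' x₀ * x₀ + m / 2 * (x₁ ^ 2 - x₀ ^ 2)) /
        (m * (x₁ - x₀) + f' x₁ - f' x₀))
    (hy' : y' = -(x₁ - x₀) / 4 - (f' x₁ - f' x₀) / (4 * m) +
      (f x₀ - f x₁ + f' x₁ * x₁ - f' x₀ * x₀ + m / 2 * (x₁ ^ 2 - x₀ ^ 2)) /
        (m * (x₁ - x₀) + f' x₁ - f' x₀))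
    (hb : bq = f' x₁ - 2 * m * y + m * x₁)
    (hc : cq = f x₁ - f' x₁ * x₁ - m / 2 * x₁ ^ 2 + m * y ^ 2)
    (hroot : ∃ x ∈ Set.Icc x₀ x₁, f x = 0) :
    ∃ x ∈ Set.Icc x₀ x₁,
      (if x ≤ y' then f x₀ + f' x₀ * (x - x₀) - m / 2 * (x - x₀) ^ 2
       else if x ≤ y then m / 2 * x ^ 2 + bq * x + cq
       else f x₁ - f' x₁ * (x₁ - x) - m / 2 * (x₁ - x) ^ 2) ≤ 0 := by
  obtain ⟨r, hr, hfr⟩ := hroot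
  refine ⟨r, hr, ?_⟩
  have hf : HasLipschitzDerivOn f f' m (Icc x₀ x₁) := (HasLipschitzDerivOn.mk hderiv hlip).mono_const hm
  have h₀ := hf.tangent_add_mul_sq_le hm0 hr (left_mem_Icc.2 (hr.1.trans hr.2))
  have h₁ := hf.tangent_add_mul_sq_le hm0 hr (right_mem_Icc.2 (hr.1.trans hr.2))
  set δ₀ := (x₀ - r) / 2 + (f' x₀ - f' r) / (2 * m)
  set δ₁ := (x₁ - r) / 2 + (f' x₁ - f' r) / (2 * m)
  have hgap : δ₁ - δ₀ = y - y' := by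
    rw [hy, hy']
    ring
  split_ifs with hry' hry
  · linarith [mul_nonneg hm0.le (sq_nonneg δ₀)]
  · replace hry' := not_le.1 hry'
    have hψ₁ : m / 2 * r ^ 2 + bq * r + cq =
        f x₁ + f' x₁ * (r - x₁) - m / 2 * (r - x₁) ^ 2 + m * (y - r) ^ 2 := by
      rw [hb, hc]
      ring
    have hψ₀ := middle_eq_left_add_mul_sq hm0 (hry'.trans_le hry) hy hy' hb hc r
    rcases le_or_gt (y - r) δ₁ with hδ₁ | hδ₁
    · have := pow_le_pow_left₀ (sub_nonneg.2 hry) hδ₁ 2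
      rw [hψ₁]
      linarith [mul_le_mul_of_nonneg_left this hm0.le]
    · have := pow_le_pow_left₀ (sub_nonneg.2 hry'.le) (show r - y' ≤ -δ₀ by linarith) 2
      rw [neg_sq] at this
      rw [hψ₀]
      linarith [mul_le_mul_of_nonneg_left this hm0.le]
  · have hright : f x₁ - f' x₁ * (x₁ - r) - m / 2 * (x₁ - r) ^ 2 =
        f x₁ + f' x₁ * (r - x₁) - m / 2 * (r - x₁) ^ 2 := by
      ring
    linarith [mul_nonneg hm0.le (sq_nonneg δ₁)]

theorem root_implies_nonpositive_characteristic (f f' : ℝ → ℝ)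
    (x₀ x₁ L m y y' bq cq : ℝ) (hx : x₀ < x₁) (hm0 : 0 < m)
    (hderiv : ∀ x ∈ Set.Icc x₀ x₁, HasDerivAt f (f' x) x)
    (hlip : ∀ x ∈ Set.Icc x₀ x₁, ∀ z ∈ Set.Icc x₀ x₁, |f' x - f' z| ≤ L * |x - z|)
    (hm : L ≤ m)
    (hy : y = (x₁ - x₀) / 4 + (f' x₁ - f' x₀) / (4 * m) +
      (f x₀ - f x₁ + f' x₁ * x₁ - f' x₀ * x₀ + m / 2 * (x₁ ^ 2 - x₀ ^ 2)) /
        (m * (x₁ - x₀) + f' x₁ - f' x₀))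
    (hy' : y' = -(x₁ - x₀) / 4 - (f' x₁ - f' x₀) / (4 * m) +
      (f x₀ - f x₁ + f' x₁ * x₁ - f' x₀ * x₀ + m / 2 * (x₁ ^ 2 - x₀ ^ 2)) /
        (m * (x₁ - x₀) + f' x₁ - f' x₀))
    (hb : bq = f' x₁ - 2 * m * y + m * x₁)
    (hc : cq = f x₁ - f' x₁ * x₁ - m / 2 * x₁ ^ 2 + m * y ^ 2)
    (hroot : ∃ x ∈ Set.Icc x₀ x₁, f x = 0) :
    ∃ x ∈ Set.Icc x₀ x₁,
      (if x ≤ y' then f x₀ + f' x₀ * (x - x₀) - m / 2 * (x - x₀) ^ 2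
       else if x ≤ y then m / 2 * x ^ 2 + bq * x + cq
       else f x₁ - f' x₁ * (x₁ - x) - m / 2 * (x₁ - x) ^ 2) ≤ 0 :=
  root_implies_nonpositive_characteristic_general f f' x₀ x₁ L m y y' bq cq hm0 hderiv hlip hm hy
    hy' hb hc hroot
end
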